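/- Let U = [[A,C],[B,D]] be pseudo-unitary with respect to Γ = diag(1_n,-1_n). Then U admits the factorization U = [[Δ₁, Z†Δ₂],[ZΔ₁, Δ₂]] · diag(V₁, V₂), where Z = BA⁻¹, Δ₁ = (AA†)^{1/2} = (1 - Z†Z)^{-1/2}, Δ₂ = (DD†)^{1/2} = (1 - ZZ†)^{-1/2}, V₁ = (AA†)^{-1/2}A, V₂ = (DD†)^{-1/2}D, and V₁, V₂ are unitary. -/

import Mathlib

/-!
The `(1,1)`, `(1,2)` and `(2,2)` blocks of `Uᴴ Γ U = Γ` read `AᴴA - BᴴB = 1`, `AᴴC = BᴴD` and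
`DᴴD - CᴴC = 1`. The outer two make `AᴴA` and `DᴴD` positive definite, so `A` and `D` are
invertible. Conjugating the first by `A⁻¹` gives `1 - ZᴴZ = (AAᴴ)⁻¹`; the second says
`Zᴴ = CD⁻¹`, and with it the third gives `1 - ZZᴴ = (DDᴴ)⁻¹`. Taking `Δ₁`, `Δ₂` to be the
positive square roots of `AAᴴ`, `DDᴴ`, the matrix `V = Δ⁻¹A` is unitary since
`VVᴴ = Δ⁻¹ Δ² Δ⁻¹ = 1`, and the factorization reduces to `ZA = B`, `ZᴴD = C`.
-/

open Matrix ComplexOrder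

namespace Matrix

variable {m n R 𝕜 : Type*} [Fintype m] [Fintype n] [DecidableEq m]

section CommRing

variable [CommRing R] [StarRing R]

theorem fromBlocks_conjTranspose_mul_signature_mul [DecidableEq n] (A : Matrix m m R)
    (B : Matrix n m R) (C : Matrix m n R) (D : Matrix n n R) :
    (fromBlocks A C B D)ᴴ * fromBlocks 1 0 0 (-1) * fromBlocks A C B D =
      fromBlocks (Aᴴ * A - Bᴴ * B) (Aᴴ * C - Bᴴ * D) (Cᴴ * A - Dᴴ * B) (Cᴴ * C - Dᴴ * D) := by
  simp [fromBlocks_conjTranspose, fromBlocks_multiply, sub_eq_add_neg]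

theorem blocks_of_conjTranspose_mul_signature_mul_eq [DecidableEq n] {A : Matrix m m R}
    {B : Matrix n m R} {C : Matrix m n R} {D : Matrix n n R}
    (h : (fromBlocks A C B D)ᴴ * fromBlocks 1 0 0 (-1) * fromBlocks A C B D =
      fromBlocks 1 0 0 (-1)) :
    Aᴴ * A - Bᴴ * B = 1 ∧ Aᴴ * C = Bᴴ * D ∧ Dᴴ * D - Cᴴ * C = 1 := by
  rw [fromBlocks_conjTranspose_mul_signature_mul, fromBlocks_inj] at h
  obtain ⟨h₁₁, h₁₂, -, h₂₂⟩ := h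
  exact ⟨h₁₁, sub_eq_zero.mp h₁₂, by rw [← neg_sub, h₂₂, neg_neg]⟩

theorem mul_conjTranspose_eq_inv_one_sub_of_conjTranspose_mul_sub_eq_one {A : Matrix m m R}
    {B : Matrix n m R} (h : Aᴴ * A - Bᴴ * B = 1) (hA : IsUnit A) :
    A * Aᴴ = (1 - (B * A⁻¹)ᴴ * (B * A⁻¹))⁻¹ := by
  have hA₁ : IsUnit A.det := (isUnit_iff_isUnit_det _).mp hA
  have hA₂ : IsUnit Aᴴ.det := (isUnit_iff_isUnit_det _).mp hA.star
  have hBA : (B * A⁻¹)ᴴ * (B * A⁻¹) = Aᴴ⁻¹ * (Aᴴ * A - 1) * A⁻¹ := by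
    rw [← h, sub_sub_cancel, conjTranspose_mul, conjTranspose_nonsing_inv]
    simp only [Matrix.mul_assoc]
  refine (inv_eq_right_inv ?_).symm
  calc (1 - (B * A⁻¹)ᴴ * (B * A⁻¹)) * (A * Aᴴ)
      = A * Aᴴ - Aᴴ⁻¹ * Aᴴ * A * (A⁻¹ * A) * Aᴴ + Aᴴ⁻¹ * (A⁻¹ * A) * Aᴴ := by
        rw [hBA]; noncomm_ring
    _ = 1 := by
        rw [nonsing_inv_mul _ hA₁, nonsing_inv_mul _ hA₂, Matrix.mul_one, Matrix.one_mul,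
          sub_self, zero_add, Matrix.mul_one, nonsing_inv_mul _ hA₂]

theorem conjTranspose_mul_inv_eq_mul_inv [DecidableEq n] {A : Matrix m m R} {B : Matrix n m R}
    {C : Matrix m n R} {D : Matrix n n R} (h : Aᴴ * C = Bᴴ * D) (hA : IsUnit A) (hD : IsUnit D) :
    (B * A⁻¹)ᴴ = C * D⁻¹ := by
  have hA' : IsUnit Aᴴ.det := (isUnit_iff_isUnit_det _).mp hA.star
  have hD' : IsUnit D.det := (isUnit_iff_isUnit_det _).mp hD
  rw [conjTranspose_mul, conjTranspose_nonsing_inv]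
  calc Aᴴ⁻¹ * Bᴴ = Aᴴ⁻¹ * (Bᴴ * D) * D⁻¹ := by
        rw [Matrix.mul_assoc, Matrix.mul_assoc, mul_nonsing_inv _ hD', Matrix.mul_one]
    _ = C * D⁻¹ := by rw [← h, ← Matrix.mul_assoc, nonsing_inv_mul _ hA', Matrix.one_mul]

theorem inv_mul_mem_unitaryGroup {Δ A : Matrix m m R} (hΔ : Δ.IsHermitian) (hΔ' : IsUnit Δ)
    (h : Δ * Δ = A * Aᴴ) : Δ⁻¹ * A ∈ unitaryGroup m R := by
  rw [mem_unitaryGroup_iff, star_eq_conjTranspose, conjTranspose_mul, conjTranspose_nonsing_inv,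
    hΔ.eq]
  calc Δ⁻¹ * A * (Aᴴ * Δ⁻¹) = Δ⁻¹ * (Δ * Δ) * Δ⁻¹ := by rw [h]; noncomm_ring
    _ = 1 := by
      rw [← mul_assoc, nonsing_inv_mul _ ((isUnit_iff_isUnit_det _).mp hΔ'), one_mul,
        mul_nonsing_inv _ ((isUnit_iff_isUnit_det _).mp hΔ')]

end CommRing

section RCLike

variable [RCLike 𝕜]

theorem isUnit_of_conjTranspose_mul_self_sub_eq_one {A : Matrix m m 𝕜} {B : Matrix n m 𝕜}
    (h : Aᴴ * A - Bᴴ * B = 1) : IsUnit A := by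
  have hpos : (Aᴴ * A).PosDef := by
    rw [sub_eq_iff_eq_add.mp h]
    exact PosDef.one.add_posSemidef (posSemidef_conjTranspose_mul_self B)
  exact isUnit_of_mul_isUnit_right hpos.isUnit

open scoped MatrixOrder Matrix.Norms.L2Operator in
theorem exists_posDef_mul_self_eq_mul_conjTranspose {A : Matrix m m 𝕜} (hA : IsUnit A) :
    ∃ Δ : Matrix m m 𝕜, Δ.PosDef ∧ Δ * Δ = A * Aᴴ := by
  have hAA : IsStrictlyPositive (A * Aᴴ) :=
    (hA.mul hA.star).isStrictlyPositive (mul_star_self_nonneg A)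
  exact ⟨CFC.sqrt _, hAA.sqrt.posDef, CFC.sqrt_mul_sqrt_self _⟩

end RCLike

end Matrix

theorem iwasawa_factorization {n : ℕ}
    (A B C D : Matrix (Fin n) (Fin n) ℂ)
    (hU : (fromBlocks A C B D)ᴴ * (fromBlocks 1 0 0 (-1) : Matrix (Fin n ⊕ Fin n) (Fin n ⊕ Fin n) ℂ) *
            (fromBlocks A C B D)
          = (fromBlocks 1 0 0 (-1) : Matrix (Fin n ⊕ Fin n) (Fin n ⊕ Fin n) ℂ))
    (Z : Matrix (Fin n) (Fin n) ℂ) (hZ : Z = B * A⁻¹) :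
    IsUnit A ∧ IsUnit D ∧
    ∃ Δ₁ Δ₂ : Matrix (Fin n) (Fin n) ℂ,
      Δ₁.PosDef ∧ Δ₂.PosDef ∧
      Δ₁ * Δ₁ = A * Aᴴ ∧ Δ₂ * Δ₂ = D * Dᴴ ∧
      A * Aᴴ = (1 - Zᴴ * Z)⁻¹ ∧ D * Dᴴ = (1 - Z * Zᴴ)⁻¹ ∧
      (Δ₁⁻¹ * A)ᴴ * (Δ₁⁻¹ * A) = 1 ∧ (Δ₂⁻¹ * D)ᴴ * (Δ₂⁻¹ * D) = 1 ∧
      fromBlocks A C B D =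
        fromBlocks Δ₁ (Zᴴ * Δ₂) (Z * Δ₁) Δ₂ * fromBlocks (Δ₁⁻¹ * A) 0 0 (Δ₂⁻¹ * D) := by
  obtain ⟨hAB, hAC, hDC⟩ := blocks_of_conjTranspose_mul_signature_mul_eq hU
  have hA := isUnit_of_conjTranspose_mul_self_sub_eq_one hAB
  have hD := isUnit_of_conjTranspose_mul_self_sub_eq_one hDC
  have hZA : Z * A = B := by
    rw [hZ, nonsing_inv_mul_cancel_right _ _ ((isUnit_iff_isUnit_det _).mp hA)]
  have hZD : Zᴴ * D = C := by
    rw [hZ, conjTranspose_mul_inv_eq_mul_inv hAC hA hD,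
      nonsing_inv_mul_cancel_right _ _ ((isUnit_iff_isUnit_det _).mp hD)]
  obtain ⟨Δ₁, hΔ₁, hΔ₁A⟩ := exists_posDef_mul_self_eq_mul_conjTranspose hA
  obtain ⟨Δ₂, hΔ₂, hΔ₂D⟩ := exists_posDef_mul_self_eq_mul_conjTranspose hD
  refine ⟨hA, hD, Δ₁, Δ₂, hΔ₁, hΔ₂, hΔ₁A, hΔ₂D, ?_, ?_,
    Unitary.star_mul_self_of_mem (inv_mul_mem_unitaryGroup hΔ₁.isHermitian hΔ₁.isUnit hΔ₁A),
    Unitary.star_mul_self_of_mem (inv_mul_mem_unitaryGroup hΔ₂.isHermitian hΔ₂.isUnit hΔ₂D), ?_⟩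
  · rw [hZ, mul_conjTranspose_eq_inv_one_sub_of_conjTranspose_mul_sub_eq_one hAB hA]
  · have hZ' : Z = (C * D⁻¹)ᴴ := by
      rw [← conjTranspose_mul_inv_eq_mul_inv hAC hA hD, conjTranspose_conjTranspose, hZ]
    rw [hZ', conjTranspose_conjTranspose,
      mul_conjTranspose_eq_inv_one_sub_of_conjTranspose_mul_sub_eq_one hDC hD]
  · have hΔ₁' := (isUnit_iff_isUnit_det _).mp hΔ₁.isUnit
    have hΔ₂' := (isUnit_iff_isUnit_det _).mp hΔ₂.isUnit
    simp [fromBlocks_multiply, Matrix.mul_assoc, mul_nonsing_inv_cancel_left _ _ hΔ₁',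
      mul_nonsing_inv_cancel_left _ _ hΔ₂', hZA, hZD]
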